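/- Let V be a ℤ≥0-graded vertex algebra over k containing 1/2, with A = V₀ and Ω ⊂ V₁ the k-submodule generated by elements a_{(-1)}∂b (a, b ∈ A, ∂b := b_{(-2)}𝟙). Then Ω is an A-module under the operation (a, ω) ↦ a_{(-1)}ω: that is, (a_{(-1)}b)_{(-1)}ω = a_{(-1)}(b_{(-1)}ω) and 𝟙_{(-1)}ω = ω for a, b ∈ A and ω ∈ Ω. -/
import Mathlib


/-- `(-1)^n` for an integer exponent `n`. -/
def negOnePow (n : ℤ) : ℤ := if Even n then 1 else -1

/-- A `ℤ≥0`-graded vertex algebra over a commutative ring `k` (section 0.5 of the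
paper): a graded `k`-module `V` with a vacuum vector `𝟙 ∈ V₀`, bilinear operations
`a_{(n)}b` of degree `-n-1` for all `n ∈ ℤ`, satisfying the vacuum axioms (0.5.2)
and the Borcherds identity (0.5.3).  Here `C(m,j)` for `m ∈ ℤ`, `j ∈ ℕ` is the
generalized binomial coefficient, formalized via `Ring.choose` on `ℤ`; infinite
sums are expressed by `finsum` (`∑ᶠ`), and are locally finite by the grading. -/
structure GradedVertexAlgebra (k : Type*) (V : Type*) [CommRing k]
    [AddCommGroup V] [Module k V] where
  /-- the grading `V = ⊕_{i ≥ 0} V_i` -/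
  grading : ℕ → Submodule k V
  isInternal : DirectSum.IsInternal grading
  /-- the vacuum vector `𝟙` -/
  vac : V
  vac_mem : vac ∈ grading 0
  /-- the operations `a_{(n)} b`, `n ∈ ℤ` -/
  nop : ℤ → V →ₗ[k] V →ₗ[k] V
  /-- `_{(n)}` has degree `-n-1`; in particular it vanishes when the target degree
  `i + j - n - 1` is negative. -/
  nop_deg : ∀ (i j : ℕ) (n : ℤ) (x y : V), x ∈ grading i → y ∈ grading j →
    (∀ d : ℕ, (d : ℤ) = (i : ℤ) + j - n - 1 → nop n x y ∈ grading d) ∧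
    ((i : ℤ) + j - n - 1 < 0 → nop n x y = 0)
  /-- (0.5.2): `𝟙_{(n)}a = δ_{n,-1} a` -/
  vac_nop : ∀ (n : ℤ) (a : V), nop n vac a = if n = -1 then a else 0
  /-- (0.5.2): `a_{(-1)}𝟙 = a` -/
  nop_vac_neg_one : ∀ a : V, nop (-1) a vac = a
  /-- (0.5.2): `a_{(n)}𝟙 = 0` for `n ≥ 0` -/
  nop_vac : ∀ n : ℤ, 0 ≤ n → ∀ a : V, nop n a vac = 0
  /-- (0.5.3): the Borcherds identity. -/
  borcherds : ∀ (m n l : ℤ) (a b c : V),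
    (∑ᶠ j : ℕ, Ring.choose m j • nop (m + l - j) (nop (n + j) a b) c)
      = ∑ᶠ j : ℕ, ((-1 : ℤ) ^ j * Ring.choose n j) •
          (nop (m + n - j) a (nop (l + j) b c)
            - negOnePow n • nop (n + l - j) b (nop (m + j) a c))

/-- `∂^{(j)} a := a_{(-1-j)} 𝟙`, as in (0.5.5). -/
def GradedVertexAlgebra.vd {k V : Type*} [CommRing k] [AddCommGroup V] [Module k V]
    (𝕍 : GradedVertexAlgebra k V) (j : ℕ) (a : V) : V :=
  𝕍.nop (-1 - (j : ℤ)) a 𝕍.vac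

/-- The `k`-submodule `Ω ⊂ V₁` generated by the elements `a_{(-1)} ∂b`,
`a, b ∈ A = V₀`, where `∂b := b_{(-2)} 𝟙`. -/
def GradedVertexAlgebra.Omega {k V : Type*} [CommRing k] [AddCommGroup V] [Module k V]
    (𝕍 : GradedVertexAlgebra k V) : Submodule k V :=
  Submodule.span k {v | ∃ a b : V, a ∈ 𝕍.grading 0 ∧ b ∈ 𝕍.grading 0 ∧
    v = 𝕍.nop (-1) a (𝕍.nop (-2) b 𝕍.vac)}

section OmegaAux

variable {k V : Type*} [CommRing k] [AddCommGroup V] [Module k V]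
variable (𝕍 : GradedVertexAlgebra k V)

lemma negOnePow_zero : negOnePow 0 = 1 := by simp [negOnePow]
lemma negOnePow_neg_one : negOnePow (-1) = -1 := by simp [negOnePow, Int.even_iff]

/-- finsum of a function supported on `{0,1}` -/
lemma finsum_two (f : ℕ → V) (h : ∀ j, 2 ≤ j → f j = 0) :
    ∑ᶠ j, f j = f 0 + f 1 := by
  have hs : Function.support f ⊆ (({0, 1} : Finset ℕ) : Set ℕ) := by
    intro j hj
    simp only [Finset.coe_insert, Finset.coe_singleton, Set.mem_insert_iff,
      Set.mem_singleton_iff]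
    by_contra hc
    push_neg at hc
    exact hj (h j (by omega))
  rw [finsum_eq_finset_sum_of_support_subset f hs]
  simp

/-- `a_{(n)}b = 0` for `a, b ∈ V₀`, `n ≥ 0`. -/
lemma nop00 {a b : V} (ha : a ∈ 𝕍.grading 0) (hb : b ∈ 𝕍.grading 0)
    {n : ℤ} (hn : 0 ≤ n) : 𝕍.nop n a b = 0 :=
  (𝕍.nop_deg 0 0 n a b ha hb).2 (by push_cast; omega)

/-- `a_{(n)}x = 0` for `a ∈ V₀`, `x ∈ V₁`, `n ≥ 1`. -/
lemma nop01 {a x : V} (ha : a ∈ 𝕍.grading 0) (hx : x ∈ 𝕍.grading 1)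
    {n : ℤ} (hn : 1 ≤ n) : 𝕍.nop n a x = 0 :=
  (𝕍.nop_deg 0 1 n a x ha hx).2 (by push_cast; omega)

lemma mem0 {a b : V} (ha : a ∈ 𝕍.grading 0) (hb : b ∈ 𝕍.grading 0) :
    𝕍.nop (-1) a b ∈ 𝕍.grading 0 :=
  (𝕍.nop_deg 0 0 (-1) a b ha hb).1 0 (by norm_num)

lemma vd_mem {b : V} (hb : b ∈ 𝕍.grading 0) :
    𝕍.nop (-2) b 𝕍.vac ∈ 𝕍.grading 1 :=
  (𝕍.nop_deg 0 0 (-2) b 𝕍.vac hb 𝕍.vac_mem).1 1 (by norm_num)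

lemma gen_mem {c d : V} (hc : c ∈ 𝕍.grading 0) (hd : d ∈ 𝕍.grading 0) :
    𝕍.nop (-1) c (𝕍.nop (-2) d 𝕍.vac) ∈ 𝕍.grading 1 :=
  (𝕍.nop_deg 0 1 (-1) c _ hc (vd_mem 𝕍 hd)).1 1 (by norm_num)

/-- `b_{(0)}∂d = 0` for `b, d ∈ V₀`. -/
lemma nop_zero_vd {b d : V} (hb : b ∈ 𝕍.grading 0) (hd : d ∈ 𝕍.grading 0) :
    𝕍.nop 0 b (𝕍.nop (-2) d 𝕍.vac) = 0 := by
  have H := 𝕍.borcherds 0 0 (-2) b d 𝕍.vac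
  rw [finsum_eq_zero_of_forall_eq_zero (fun j => by
    rw [nop00 𝕍 hb hd (by positivity), map_zero, LinearMap.zero_apply, smul_zero])] at H
  rw [finsum_two _ (fun j hj => by
    rw [𝕍.nop_vac _ (by omega), 𝕍.nop_vac _ (by omega), map_zero, map_zero,
      smul_zero, sub_zero, smul_zero])] at H
  simp only [Nat.cast_zero, Nat.cast_one, pow_zero, pow_one, Ring.choose_zero_right,
    Ring.choose_one_right, one_mul, mul_zero, zero_smul, add_zero, one_smul,
    negOnePow_zero, one_smul] at H
  norm_num at H
  rw [𝕍.nop_vac 0 le_rfl, map_zero, sub_zero] at H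
  exact H.symm

/-- "commutator formula": `b_{(0)}(c_{(-1)}x) = c_{(-1)}(b_{(0)}x)` for `b,c ∈ V₀`, `x ∈ V₁`. -/
lemma comm0 {b c x : V} (hb : b ∈ 𝕍.grading 0) (hc : c ∈ 𝕍.grading 0)
    (hx : x ∈ 𝕍.grading 1) :
    𝕍.nop 0 b (𝕍.nop (-1) c x) = 𝕍.nop (-1) c (𝕍.nop 0 b x) := by
  have H := 𝕍.borcherds 0 0 (-1) b c x
  rw [finsum_eq_zero_of_forall_eq_zero (fun j => by
    rw [nop00 𝕍 hb hc (by positivity), map_zero, LinearMap.zero_apply, smul_zero])] at H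
  rw [finsum_two _ (fun j hj => by
    rw [nop01 𝕍 hc hx (by omega), nop01 𝕍 hb hx (by omega), map_zero, map_zero,
      smul_zero, sub_zero, smul_zero])] at H
  simp only [Nat.cast_zero, Nat.cast_one, pow_zero, pow_one, Ring.choose_zero_right,
    Ring.choose_one_right, one_mul, mul_zero, zero_smul, add_zero, one_smul,
    negOnePow_zero] at H
  norm_num at H
  linear_combination (norm := abel) -H

/-- (0.5.4): for `a, b ∈ V₀`, `x ∈ V₁`. -/
lemma assoc_aux {a b x : V} (ha : a ∈ 𝕍.grading 0) (hb : b ∈ 𝕍.grading 0)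
    (hx : x ∈ 𝕍.grading 1) :
    𝕍.nop (-1) (𝕍.nop (-1) a b) x
      = 𝕍.nop (-1) a (𝕍.nop (-1) b x) + 𝕍.nop (-2) a (𝕍.nop 0 b x)
        + 𝕍.nop (-2) b (𝕍.nop 0 a x) := by
  have H := 𝕍.borcherds 0 (-1) (-1) a b x
  rw [finsum_eq_single _ 0 (fun j hj => by
    rw [nop00 𝕍 ha hb (by omega : (0:ℤ) ≤ -1 + j), map_zero, LinearMap.zero_apply,
      smul_zero])] at H
  rw [finsum_two _ (fun j hj => by
    rw [nop01 𝕍 hb hx (by omega : (1:ℤ) ≤ -1 + j), nop01 𝕍 ha hx (by omega : (1:ℤ) ≤ 0 + j),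
      map_zero, map_zero, smul_zero, sub_zero, smul_zero])] at H
  have h1 : 𝕍.nop (0 + 1) a x = 0 := nop01 𝕍 ha hx (by norm_num)
  simp only [Nat.cast_zero, Nat.cast_one, pow_zero, pow_one, Ring.choose_zero_right,
    Ring.choose_one_right, one_mul, one_smul, negOnePow_neg_one, neg_one_smul,
    sub_neg_eq_add, h1] at H
  norm_num at H
  rw [H]; abel

/-- `a_{(0)}` kills the generators of `Ω`. -/
lemma nop_zero_gen {a c d : V} (ha : a ∈ 𝕍.grading 0) (hc : c ∈ 𝕍.grading 0)
    (hd : d ∈ 𝕍.grading 0) :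
    𝕍.nop 0 a (𝕍.nop (-1) c (𝕍.nop (-2) d 𝕍.vac)) = 0 := by
  rw [comm0 𝕍 ha hc (vd_mem 𝕍 hd), nop_zero_vd 𝕍 ha hd, map_zero]

end OmegaAux

/-- Section 2.1: over a ring containing `1/2`, the submodule `Ω ⊂ V₁` spanned by
elements `a_{(-1)}∂b` is a module over `A = V₀` under `(a, ω) ↦ a_{(-1)}ω`:
it is stable under this operation, `(a_{(-1)}b)_{(-1)}ω = a_{(-1)}(b_{(-1)}ω)`
and `𝟙_{(-1)}ω = ω`. -/
theorem omega_module {k V : Type*} [CommRing k] [AddCommGroup V] [Module k V]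
    [Invertible (2 : k)] (𝕍 : GradedVertexAlgebra k V) :
    (∀ a : V, a ∈ 𝕍.grading 0 → ∀ ω ∈ 𝕍.Omega, 𝕍.nop (-1) a ω ∈ 𝕍.Omega) ∧
    (∀ a b : V, a ∈ 𝕍.grading 0 → b ∈ 𝕍.grading 0 → ∀ ω ∈ 𝕍.Omega,
      𝕍.nop (-1) (𝕍.nop (-1) a b) ω = 𝕍.nop (-1) a (𝕍.nop (-1) b ω)) ∧
    (∀ ω ∈ 𝕍.Omega, 𝕍.nop (-1) 𝕍.vac ω = ω) := by
  refine ⟨?_, ?_, ?_⟩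
  · intro a ha ω hω
    induction hω using Submodule.span_induction with
    | mem x hx =>
      obtain ⟨c, d, hc, hd, rfl⟩ := hx
      have key : 𝕍.nop (-1) a (𝕍.nop (-1) c (𝕍.nop (-2) d 𝕍.vac))
          = 𝕍.nop (-1) (𝕍.nop (-1) a c) (𝕍.nop (-2) d 𝕍.vac) := by
        rw [assoc_aux 𝕍 ha hc (vd_mem 𝕍 hd), nop_zero_vd 𝕍 hc hd, nop_zero_vd 𝕍 ha hd,
          map_zero, map_zero, add_zero, add_zero]
      rw [key]
      exact Submodule.subset_span ⟨_, _, mem0 𝕍 ha hc, hd, rfl⟩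
    | zero => simp
    | add x y hx hy ihx ihy => rw [map_add]; exact Submodule.add_mem _ ihx ihy
    | smul r x hx ihx => rw [map_smul]; exact Submodule.smul_mem _ _ ihx
  · intro a b ha hb ω hω
    induction hω using Submodule.span_induction with
    | mem x hx =>
      obtain ⟨c, d, hc, hd, rfl⟩ := hx
      rw [assoc_aux 𝕍 ha hb (gen_mem 𝕍 hc hd),
        nop_zero_gen 𝕍 hb hc hd, nop_zero_gen 𝕍 ha hc hd, map_zero, map_zero,
        add_zero, add_zero]
    | zero => simp
    | add x y hx hy ihx ihy => simp [map_add, ihx, ihy]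
    | smul r x hx ihx => simp [map_smul, ihx]
  · intro ω hω
    rw [𝕍.vac_nop]
    simp
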